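/- arXiv:0711.4762 — 3 statements merged into one kernel-verified Lean document; each statement's English description precedes it below -/
import Mathlib

section
/- Let s ≥ 1/4, 1 ≤ p′ < ∞ with p′(s+1/4) > 1. Then there is a constant C such that for all integers n₁, n₂, n₃ with n := n₁+n₂+n₃ > 0, |n₁|,|n₂|,|n₃| ∈ [n/4, 5n], and nⱼ ≠ n for j = 1,2,3: the quantity ∑_{n₁,n₂} m(n₁,n₂,n−n₁−n₂)^{p′} restricted to this region is at most C, where m(n₁,n₂,n₃) = ⟨n⟩^s |n| / (⟨σ(n₁,n₂,n₃)⟩^{1/2} ⟨n₁⟩^s⟨n₂⟩^s⟨n₃⟩^s) and σ(n₁,n₂,n₃) = 3(n−n₁)(n−n₂)(n−n₃). -/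
open scoped ENNReal

/-- The Japanese bracket `⟨x⟩ = (1+x²)^{1/2}`. -/
noncomputable def jb (x : ℝ) : ℝ := Real.sqrt (1 + x ^ 2)

/-- The mKdV kernel `m(n₁,n₂,n₃) = ⟨n⟩^s |n| / (⟨σ⟩^{1/2} ⟨n₁⟩^s⟨n₂⟩^s⟨n₃⟩^s)`
with `σ(n₁,n₂,n₃) = 3(n−n₁)(n−n₂)(n−n₃)`, `n = n₁+n₂+n₃`. -/
noncomputable def mKer (s : ℝ) (n₁ n₂ n₃ : ℤ) : ℝ :=
  jb (n₁ + n₂ + n₃ : ℤ) ^ s * |((n₁ + n₂ + n₃ : ℤ) : ℝ)| /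
    (jb ((3 * (n₂ + n₃) * (n₃ + n₁) * (n₁ + n₂) : ℤ) : ℝ) ^ ((1:ℝ)/2)
      * jb n₁ ^ s * jb n₂ ^ s * jb n₃ ^ s)

/-! Write `aⱼ = n - nⱼ`. Then `a₁ + a₂ + a₃ = 2n` and `σ = 3a₁a₂a₃`, so some `|aₖ| ≥ 2n/3` and
`|σ| ≥ 2n|aᵢaⱼ|` for the other pair. As `⟨n⟩ ≤ 2n` and `⟨nⱼ⟩ ≥ n/4`, this gives
`m ≲ n^{1/2-2s} |aᵢaⱼ|^{-1/2}`, and since `|aᵢaⱼ| ≤ 36n²` and `s ≥ 1/4`,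
`m ≲ |aᵢaⱼ|^{-(s+1/4)}`. So `m^{p'}` is bounded by a sum of three products `|aᵢ|^{-t}|aⱼ|^{-t}`,
`t = p'(s+1/4) > 1`; each pair `(aᵢ, aⱼ)` determines `(n₁, n₂)`, so the sum is at most
`3 (∑_{a ≠ 0} |a|^{-t})²`. -/

lemma abs_le_jb (x : ℝ) : |x| ≤ jb x := by
  rw [jb, ← Real.sqrt_sq_eq_abs]
  exact Real.sqrt_le_sqrt (by linarith)

lemma jb_le_two_mul_abs {x : ℝ} (hx : 1 ≤ |x|) : jb x ≤ 2 * |x| := by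
  rw [jb, Real.sqrt_le_left (by positivity)]
  nlinarith [sq_abs x]

lemma jb_pos (x : ℝ) : 0 < jb x := Real.sqrt_pos.2 (by positivity)

lemma mKer_nonneg (s : ℝ) (n₁ n₂ n₃ : ℤ) : 0 ≤ mKer s n₁ n₂ n₃ := by
  unfold mKer jb
  positivity

theorem mKer_le_majorant {s B : ℝ} (hs : 0 ≤ s) (hB : 0 < B) {n n₁ n₂ n₃ : ℤ} (hn : 0 < n)
    (hsum : n₁ + n₂ + n₃ = n) (h₁ : n ≤ 4 * |n₁|) (h₂ : n ≤ 4 * |n₂|) (h₃ : n ≤ 4 * |n₃|)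
    (hσ : 2 * n * B ≤ |((3 * (n₂ + n₃) * (n₃ + n₁) * (n₁ + n₂) : ℤ) : ℝ)|) :
    mKer s n₁ n₂ n₃ ≤
      (2 * n) ^ s * n / ((2 * n * B) ^ (1/2 : ℝ) * (n / 4) ^ s * (n / 4) ^ s * (n / 4) ^ s) := by
  have hn' : (0 : ℝ) < n := by exact_mod_cast hn
  have habs : |(n : ℝ)| = n := abs_of_pos hn'
  have hjb : ∀ m : ℤ, n ≤ 4 * |m| → (n : ℝ) / 4 ≤ jb m := fun m hm =>
    le_trans (by rw [div_le_iff₀' four_pos, ← Int.cast_abs]; exact_mod_cast hm) (abs_le_jb _)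
  -- for the positivity side goals of `gcongr`
  have := jb_pos ((3 * (n₂ + n₃) * (n₃ + n₁) * (n₁ + n₂) : ℤ) : ℝ)
  have := jb_pos n
  have := jb_pos n₁
  have := jb_pos n₂
  have := jb_pos n₃
  unfold mKer
  rw [hsum, habs]
  gcongr ?_ ^ _ * _ / (?_ ^ _ * ?_ ^ _ * ?_ ^ _ * ?_ ^ _)
  · simpa only [habs] using jb_le_two_mul_abs (x := n) (by rw [habs]; exact_mod_cast hn)
  · exact hσ.trans (abs_le_jb _)
  · exact hjb _ h₁
  · exact hjb _ h₂
  · exact hjb _ h₃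

-- `4608 = 2 · 4³ · 36`, from `⟨n⟩ ≤ 2n`, `⟨nⱼ⟩ ≥ n/4` and `B ≤ 36 n²`.
theorem majorant_le_rpow_neg {s N B : ℝ} (hs : 1/4 ≤ s) (hN : 0 < N) (hB : 0 < B)
    (hBN : B ≤ 36 * N ^ 2) :
    (2 * N) ^ s * N / ((2 * N * B) ^ (1/2 : ℝ) * (N / 4) ^ s * (N / 4) ^ s * (N / 4) ^ s)
      ≤ (4608 : ℝ) ^ s * B ^ (-(s + 1/4)) := by
  rw [← Real.log_le_log_iff (by positivity) (by positivity)]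
  simp (disch := positivity) only [Real.log_mul, Real.log_div, Real.log_rpow]
  have hlogB : Real.log B ≤ Real.log 36 + 2 * Real.log N := by
    simpa (disch := positivity) only [Real.log_mul, Real.log_pow, Nat.cast_ofNat] using
      Real.log_le_log hB hBN
  have h4608 : Real.log 4608 = 7 * Real.log 2 + Real.log 36 := by
    rw [show (4608 : ℝ) = 2 ^ 7 * 36 by norm_num]
    simp (disch := positivity) only [Real.log_mul, Real.log_pow]; norm_num
  have h4 : Real.log 4 = 2 * Real.log 2 := by
    rw [show (4 : ℝ) = 2 ^ 2 by norm_num, Real.log_pow]; norm_num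
  have h2 : 0 ≤ Real.log 2 := Real.log_nonneg (by norm_num)
  have h36 : 0 ≤ Real.log 36 := Real.log_nonneg (by norm_num)
  rw [h4608, h4]
  linarith [mul_le_mul_of_nonneg_left hlogB (by linarith : (0:ℝ) ≤ s - 1/4)]

theorem two_mul_abs_mul_pair_le_of_add_eq {a b c N : ℝ} (h : a + b + c = 2 * N) :
    2 * N * |a * b| ≤ 3 * |a * b * c| ∨ 2 * N * |b * c| ≤ 3 * |a * b * c| ∨
      2 * N * |c * a| ≤ 3 * |a * b * c| := by
  simp only [abs_mul]
  have hlarge : 2 * N ≤ 3 * |c| ∨ 2 * N ≤ 3 * |a| ∨ 2 * N ≤ 3 * |b| := by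
    by_contra! hsmall
    linarith [le_abs_self a, le_abs_self b, le_abs_self c]
  rcases hlarge with hc | ha | hb
  · exact Or.inl (by nlinarith [mul_nonneg (abs_nonneg a) (abs_nonneg b)])
  · exact Or.inr (Or.inl (by nlinarith [mul_nonneg (abs_nonneg b) (abs_nonneg c)]))
  · exact Or.inr (Or.inr (by nlinarith [mul_nonneg (abs_nonneg c) (abs_nonneg a)]))

lemma one_le_abs_sub_and_abs_sub_le {n m : ℤ} (hm : m ≠ n) (hm' : |m| ≤ 5 * n) :
    1 ≤ |((n - m : ℤ) : ℝ)| ∧ |((n - m : ℤ) : ℝ)| ≤ 6 * n := by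
  rw [← Int.cast_abs]
  constructor
  · exact_mod_cast Int.one_le_abs (sub_ne_zero.2 hm.symm)
  · rw [abs_le] at hm'
    exact_mod_cast abs_le.2 (by omega)

theorem mKer_rpow_le {s p' : ℝ} (hs : 1/4 ≤ s) (hp' : 0 ≤ p') {n n₁ n₂ n₃ : ℤ} (hn : 0 < n)
    (hsum : n₁ + n₂ + n₃ = n) (h₁ : n ≤ 4 * |n₁|) (h₁' : |n₁| ≤ 5 * n)
    (h₂ : n ≤ 4 * |n₂|) (h₂' : |n₂| ≤ 5 * n) (h₃ : n ≤ 4 * |n₃|) (h₃' : |n₃| ≤ 5 * n)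
    (e₁ : n₁ ≠ n) (e₂ : n₂ ≠ n) (e₃ : n₃ ≠ n) :
    mKer s n₁ n₂ n₃ ^ p' ≤ 4608 ^ (s * p') *
      (|((n - n₁ : ℤ) : ℝ)| ^ (-(p' * (s + 1/4))) * |((n - n₂ : ℤ) : ℝ)| ^ (-(p' * (s + 1/4)))
        + |((n - n₂ : ℤ) : ℝ)| ^ (-(p' * (s + 1/4))) * |((n - n₃ : ℤ) : ℝ)| ^ (-(p' * (s + 1/4)))
        + |((n - n₃ : ℤ) : ℝ)| ^ (-(p' * (s + 1/4))) * |((n - n₁ : ℤ) : ℝ)| ^ (-(p' * (s + 1/4))))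
    := by
  set t := p' * (s + 1/4)
  set σ : ℝ := ((3 * (n₂ + n₃) * (n₃ + n₁) * (n₁ + n₂) : ℤ) : ℝ) with hσ_def
  have pair : ∀ x y : ℝ, 1 ≤ |x| → 1 ≤ |y| → |x| ≤ 6 * n → |y| ≤ 6 * n → 2 * n * |x * y| ≤ |σ| →
      mKer s n₁ n₂ n₃ ^ p' ≤ 4608 ^ (s * p') * (|x| ^ (-t) * |y| ^ (-t)) := by
    intro x y hx hy hx' hy' hxy
    have hB : 0 < |x * y| := by rw [abs_mul]; nlinarith
    have hBN : |x * y| ≤ 36 * (n : ℝ) ^ 2 := by rw [abs_mul]; nlinarith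
    have hm := (mKer_le_majorant (by linarith) hB hn hsum h₁ h₂ h₃ hxy).trans
      (majorant_le_rpow_neg hs (by exact_mod_cast hn) hB hBN)
    calc mKer s n₁ n₂ n₃ ^ p' ≤ ((4608 : ℝ) ^ s * |x * y| ^ (-(s + 1/4))) ^ p' :=
          Real.rpow_le_rpow (mKer_nonneg _ _ _ _) hm hp'
      _ = _ := by
        rw [Real.mul_rpow (by positivity) (by positivity), ← Real.rpow_mul (by norm_num),
          ← Real.rpow_mul hB.le, show -(s + 1/4) * p' = -t by ring, abs_mul,
          Real.mul_rpow (abs_nonneg _) (abs_nonneg _)]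
  have hσ : |σ| = 3 * |((n - n₁ : ℤ) : ℝ) * ((n - n₂ : ℤ) : ℝ) * ((n - n₃ : ℤ) : ℝ)| := by
    rw [hσ_def, show n₂ + n₃ = n - n₁ by omega, show n₃ + n₁ = n - n₂ by omega,
      show n₁ + n₂ = n - n₃ by omega]
    push_cast
    simp only [abs_mul, abs_of_pos (three_pos : (0:ℝ) < 3)]
    ring
  have hsum' : ((n - n₁ : ℤ) : ℝ) + ((n - n₂ : ℤ) : ℝ) + ((n - n₃ : ℤ) : ℝ) = 2 * n := by
    push_cast
    linarith [(by exact_mod_cast hsum : (n₁ : ℝ) + n₂ + n₃ = n)]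
  obtain ⟨ha₁, ha₁'⟩ := one_le_abs_sub_and_abs_sub_le e₁ h₁'
  obtain ⟨ha₂, ha₂'⟩ := one_le_abs_sub_and_abs_sub_le e₂ h₂'
  obtain ⟨ha₃, ha₃'⟩ := one_le_abs_sub_and_abs_sub_le e₃ h₃'
  have hP : ∀ x y : ℝ, 0 ≤ |x| ^ (-t) * |y| ^ (-t) := fun _ _ => by positivity
  rcases two_mul_abs_mul_pair_le_of_add_eq hsum' with h | h | h
  · refine (pair _ _ ha₁ ha₂ ha₁' ha₂' (hσ ▸ h)).trans ?_
    gcongr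
    linarith [hP ((n - n₂ : ℤ) : ℝ) ((n - n₃ : ℤ) : ℝ), hP ((n - n₃ : ℤ) : ℝ) ((n - n₁ : ℤ) : ℝ)]
  · refine (pair _ _ ha₂ ha₃ ha₂' ha₃' (hσ ▸ h)).trans ?_
    gcongr
    linarith [hP ((n - n₁ : ℤ) : ℝ) ((n - n₂ : ℤ) : ℝ), hP ((n - n₃ : ℤ) : ℝ) ((n - n₁ : ℤ) : ℝ)]
  · refine (pair _ _ ha₃ ha₁ ha₃' ha₁' (hσ ▸ h)).trans ?_
    gcongr
    linarith [hP ((n - n₁ : ℤ) : ℝ) ((n - n₂ : ℤ) : ℝ), hP ((n - n₂ : ℤ) : ℝ) ((n - n₃ : ℤ) : ℝ)]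

theorem tsum_mul_comp_le_sq {α β : Type*} (g : β → ℝ≥0∞) {f : α → β × β}
    (hf : Function.Injective f) : ∑' x, g (f x).1 * g (f x).2 ≤ (∑' b, g b) ^ 2 := by
  calc _ ≤ ∑' p : β × β, g p.1 * g p.2 :=
        ENNReal.tsum_comp_le_tsum_of_injective hf (fun p => g p.1 * g p.2)
    _ = _ := by
      rw [ENNReal.tsum_prod (f := fun a b => g a * g b), sq, ← ENNReal.tsum_mul_right]
      simp_rw [ENNReal.tsum_mul_left]

theorem tsum_le_of_le_pair_weights {P : ℤ × ℤ → Prop} (n : ℤ) (g : ℤ → ℝ≥0∞) (c : ℝ≥0∞)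
    (F : {q : ℤ × ℤ // P q} → ℝ≥0∞)
    (hF : ∀ q, F q ≤ c * (g (n - q.1.1) * g (n - q.1.2)
      + g (n - q.1.2) * g (n - (n - q.1.1 - q.1.2))
      + g (n - (n - q.1.1 - q.1.2)) * g (n - q.1.1))) :
    ∑' q, F q ≤ c * (3 * (∑' a, g a) ^ 2) := by
  calc ∑' q, F q ≤ ∑' q : {q : ℤ × ℤ // P q}, c * (g (n - q.1.1) * g (n - q.1.2)
        + g (n - q.1.2) * g (n - (n - q.1.1 - q.1.2))
        + g (n - (n - q.1.1 - q.1.2)) * g (n - q.1.1)) := ENNReal.tsum_le_tsum hF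
    _ = c * (∑' q : {q : ℤ × ℤ // P q}, g (n - q.1.1) * g (n - q.1.2)
        + ∑' q : {q : ℤ × ℤ // P q}, g (n - q.1.2) * g (n - (n - q.1.1 - q.1.2))
        + ∑' q : {q : ℤ × ℤ // P q}, g (n - (n - q.1.1 - q.1.2)) * g (n - q.1.1)) := by
      rw [ENNReal.tsum_mul_left, ENNReal.tsum_add, ENNReal.tsum_add]
    _ ≤ c * ((∑' a, g a) ^ 2 + (∑' a, g a) ^ 2 + (∑' a, g a) ^ 2) := by
      gcongr
      · exact tsum_mul_comp_le_sq g (f := fun q : {q // P q} => (n - q.1.1, n - q.1.2))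
          fun a b h => by
            simp only [Prod.mk.injEq] at h; exact Subtype.ext (Prod.ext (by omega) (by omega))
      · exact tsum_mul_comp_le_sq g
          (f := fun q : {q // P q} => (n - q.1.2, n - (n - q.1.1 - q.1.2)))
          fun a b h => by
            simp only [Prod.mk.injEq] at h; exact Subtype.ext (Prod.ext (by omega) (by omega))
      · exact tsum_mul_comp_le_sq g
          (f := fun q : {q // P q} => (n - (n - q.1.1 - q.1.2), n - q.1.1))
          fun a b h => by
            simp only [Prod.mk.injEq] at h; exact Subtype.ext (Prod.ext (by omega) (by omega))
    _ = c * (3 * (∑' a, g a) ^ 2) := by ring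

theorem kernel_estimate_case1_general (s p' : ℝ) (hs : 1/4 ≤ s)
    (hp' : 1 < p' * (s + 1/4)) :
    ∃ C : ℝ, 0 < C ∧ ∀ n : ℤ, 0 < n →
      (∑' q : {q : ℤ × ℤ //
          n ≤ 4 * |q.1| ∧ |q.1| ≤ 5 * n ∧
          n ≤ 4 * |q.2| ∧ |q.2| ≤ 5 * n ∧
          n ≤ 4 * |n - q.1 - q.2| ∧ |n - q.1 - q.2| ≤ 5 * n ∧
          q.1 ≠ n ∧ q.2 ≠ n ∧ n - q.1 - q.2 ≠ n},
        ENNReal.ofReal (mKer s q.1.1 q.1.2 (n - q.1.1 - q.1.2) ^ p'))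
        ≤ ENNReal.ofReal C := by
  have hp'0 : 0 ≤ p' := by nlinarith
  have hZ : Summable fun a : ℤ => |(a : ℝ)| ^ (-(p' * (s + 1/4))) :=
    Real.summable_abs_int_rpow hp'
  have hZpos : 0 < ∑' a : ℤ, |(a : ℝ)| ^ (-(p' * (s + 1/4))) :=
    hZ.tsum_pos (fun _ => by positivity) 1 (by norm_num)
  refine ⟨3 * 4608 ^ (s * p') * (∑' a : ℤ, |(a : ℝ)| ^ (-(p' * (s + 1/4)))) ^ 2, by positivity,
    fun n hn => ?_⟩
  calc _ ≤ ENNReal.ofReal (4608 ^ (s * p')) *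
        (3 * (∑' a : ℤ, ENNReal.ofReal (|(a : ℝ)| ^ (-(p' * (s + 1/4))))) ^ 2) :=
      tsum_le_of_le_pair_weights n _ _ _ <| by
        rintro ⟨⟨n₁, n₂⟩, h₁, h₁', h₂, h₂', h₃, h₃', e₁, e₂, e₃⟩
        exact (ENNReal.ofReal_le_ofReal (mKer_rpow_le hs hp'0 hn (by ring)
          h₁ h₁' h₂ h₂' h₃ h₃' e₁ e₂ e₃)).trans_eq
          (by simp (disch := positivity) only [ENNReal.ofReal_mul, ENNReal.ofReal_add])
    _ = _ := by
      rw [← ENNReal.ofReal_tsum_of_nonneg (fun _ => by positivity) hZ]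
      simp (disch := positivity) only [ENNReal.ofReal_mul, ENNReal.ofReal_pow, ENNReal.ofReal_ofNat]
      ring

/-- Case 1 of the kernel estimate: the `ℓ^{p'}` norm of the kernel over the
region where `|n₁|,|n₂|,|n₃| ∈ [n/4, 5n]` and `nⱼ ≠ n` is uniformly bounded. -/
theorem kernel_estimate_case1 (s p' : ℝ) (hs : 1/4 ≤ s) (hp'1 : 1 ≤ p')
    (hp' : 1 < p' * (s + 1/4)) :
    ∃ C : ℝ, 0 < C ∧ ∀ n : ℤ, 0 < n →
      (∑' q : {q : ℤ × ℤ //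
          n ≤ 4 * |q.1| ∧ |q.1| ≤ 5 * n ∧
          n ≤ 4 * |q.2| ∧ |q.2| ≤ 5 * n ∧
          n ≤ 4 * |n - q.1 - q.2| ∧ |n - q.1 - q.2| ≤ 5 * n ∧
          q.1 ≠ n ∧ q.2 ≠ n ∧ n - q.1 - q.2 ≠ n},
        ENNReal.ofReal (mKer s q.1.1 q.1.2 (n - q.1.1 - q.1.2) ^ p'))
        ≤ ENNReal.ofReal C :=
  kernel_estimate_case1_general s p' hs hp'
end

section
/- Let s ≥ 1/4 and p′ ≥ 1 with p′(s+1/4) > 1. Then there is a constant C such that for every integer n > 0, ∑_{(n₂,n₃)} [⟨n₂⟩^{−s}⟨n₃⟩^{−s}|n₂+n₃|^{−1/2}]^{p′} ≤ C, where the sum runs over pairs of integers with |n₂|,|n₃| ≤ n/4 and n₂ + n₃ ≠ 0. -/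
/-
The bound is uniform in `n` because the sum over all of `ℤ²` already converges.
Write `a = s p'` and `b = p'/2`, so the summand is `⟨x⟩^{-a}⟨y⟩^{-a}|x+y|^{-b}`. Where
`⟨x⟩ ≤ ⟨y⟩` we have `|x+y| ≤ 2⟨y⟩`, so a power `c ∈ [0, a]` of `⟨y⟩` can be traded for
`|x+y|`: the summand is at most `2^c |x+y|^{-(b+c)} ⟨x⟩^{-(2a-c)}`, whose sum over `ℤ²` is the
product of two one-dimensional series after the shear `(x, y) ↦ (x, x+y)`. Both converge once
`b + c > 1` and `2a - c > 1`, and such a `c` exists exactly when `a > 1/2`, `a + b > 1` and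
`2a + b > 2`, which is what `s ≥ 1/4` and `p'(s + 1/4) > 1` give.
-/

open scoped ENNReal

lemma one_le_jb (x : ℝ) : 1 ≤ jb x := by
  rw [jb, Real.one_le_sqrt]
  nlinarith [sq_nonneg x]

lemma summable_jb_int_rpow {d : ℝ} (hd : 1 < d) : Summable fun x : ℤ => jb x ^ (-d) := by
  refine Summable.of_norm_bounded_eventually (Real.summable_abs_int_rpow hd) ?_
  filter_upwards [Set.Finite.compl_mem_cofinite (Set.finite_singleton (0 : ℤ))] with x hx
  have hx1 : (1 : ℝ) ≤ |(x : ℝ)| := mod_cast Int.one_le_abs (by simpa using hx)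
  rw [Real.norm_of_nonneg (Real.rpow_nonneg (jb_pos x).le _)]
  exact Real.rpow_le_rpow_of_nonpos (by linarith) (abs_le_jb _) (by linarith)

lemma Summable.mul_comp_add_of_nonneg {G : Type*} [AddGroup G] {f g : G → ℝ}
    (hf : Summable f) (hg : Summable g) (hf0 : 0 ≤ f) (hg0 : 0 ≤ g) :
    Summable fun p : G × G => f (p.1 + p.2) * g p.1 := by
  have := (Equiv.prodShear (Equiv.refl G) Equiv.addLeft).summable_iff.mpr
    (hg.mul_of_nonneg hf hg0 hf0)
  simpa [Function.comp_def, mul_comm] using this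

lemma summable_abs_int_add_rpow_mul_jb_rpow {β d : ℝ} (hβ : 1 < β) (hd : 1 < d) :
    Summable fun p : ℤ × ℤ =>
      |((p.1 + p.2 : ℤ) : ℝ)| ^ (-β) * (jb p.1 ^ (-d) + jb p.2 ^ (-d)) := by
  have hv0 : 0 ≤ fun m : ℤ => |(m : ℝ)| ^ (-β) := fun _ => Real.rpow_nonneg (abs_nonneg _) _
  have hu0 : 0 ≤ fun x : ℤ => jb x ^ (-d) := fun _ => Real.rpow_nonneg (jb_pos _).le _
  have hleft := (Real.summable_abs_int_rpow hβ).mul_comp_add_of_nonneg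
    (summable_jb_int_rpow hd) hv0 hu0
  have hright := (Equiv.prodComm ℤ ℤ).summable_iff.mpr hleft
  simp_rw [mul_add]
  refine hleft.add ?_
  simpa [Function.comp_def, add_comm] using hright

lemma exists_exponent_split {a b : ℝ} (ha : 1 / 2 < a) (hab : 1 < a + b) (h2ab : 2 < 2 * a + b) :
    ∃ c, 0 ≤ c ∧ c ≤ a ∧ 1 < b + c ∧ 1 < 2 * a - c := by
  -- the midpoint of the interval `(1 - b, 2a - 1)`, clamped to `[0, a]`
  refine ⟨max 0 (min a ((2 * a - b) / 2)), ?_⟩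
  rcases max_cases 0 (min a ((2 * a - b) / 2)) with ⟨h0, h0'⟩ | ⟨h0, h0'⟩ <;>
  rcases min_cases a ((2 * a - b) / 2) with ⟨hm, hm'⟩ | ⟨hm, hm'⟩ <;>
  refine ⟨?_, ?_, ?_, ?_⟩ <;> linarith

lemma rpow_neg_mul_rpow_neg_le {u v m a c : ℝ} (hu : 0 < u) (huv : u ≤ v) (hm : 0 < m)
    (hmv : m ≤ 2 * v) (hc : 0 ≤ c) (hca : c ≤ a) :
    u ^ (-a) * v ^ (-a) ≤ 2 ^ c * m ^ (-c) * u ^ (-(2 * a - c)) := by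
  have hv : 0 < v := hu.trans_le huv
  have hvc : v ^ (-c) ≤ 2 ^ c * m ^ (-c) := by
    calc v ^ (-c) ≤ (m / 2) ^ (-c) :=
          Real.rpow_le_rpow_of_nonpos (by positivity) (by linarith) (by linarith)
      _ = 2 ^ c * m ^ (-c) := by
        rw [Real.div_rpow hm.le zero_le_two, Real.rpow_neg zero_le_two, div_inv_eq_mul, mul_comm]
  have hvac : v ^ (-(a - c)) ≤ u ^ (-(a - c)) := Real.rpow_le_rpow_of_nonpos hu huv (by linarith)
  calc u ^ (-a) * v ^ (-a) = u ^ (-a) * (v ^ (-c) * v ^ (-(a - c))) := by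
        rw [← Real.rpow_add hv]; ring_nf
    _ ≤ u ^ (-a) * (2 ^ c * m ^ (-c) * u ^ (-(a - c))) := by gcongr
    _ = 2 ^ c * m ^ (-c) * u ^ (-(2 * a - c)) := by
        rw [show -(2 * a - c) = -a + -(a - c) by ring, Real.rpow_add hu]; ring

lemma jb_rpow_mul_jb_rpow_le {a c : ℝ} (hc : 0 ≤ c) (hca : c ≤ a) {x y : ℝ} (hxy : x + y ≠ 0) :
    jb x ^ (-a) * jb y ^ (-a) ≤
      2 ^ c * |x + y| ^ (-c) * (jb x ^ (-(2 * a - c)) + jb y ^ (-(2 * a - c))) := by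
  have hm : 0 < |x + y| := abs_pos.2 hxy
  have hmxy : |x + y| ≤ jb x + jb y :=
    (abs_add_le x y).trans (add_le_add (abs_le_jb x) (abs_le_jb y))
  rcases le_total (jb x) (jb y) with h | h
  · calc jb x ^ (-a) * jb y ^ (-a) ≤ 2 ^ c * |x + y| ^ (-c) * jb x ^ (-(2 * a - c)) :=
          rpow_neg_mul_rpow_neg_le (jb_pos x) h hm (by linarith) hc hca
      _ ≤ _ := by gcongr; exact le_add_of_nonneg_right (Real.rpow_nonneg (jb_pos y).le _)
  · calc jb x ^ (-a) * jb y ^ (-a) = jb y ^ (-a) * jb x ^ (-a) := mul_comm _ _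
      _ ≤ 2 ^ c * |x + y| ^ (-c) * jb y ^ (-(2 * a - c)) :=
          rpow_neg_mul_rpow_neg_le (jb_pos y) h hm (by linarith) hc hca
      _ ≤ _ := by gcongr; exact le_add_of_nonneg_left (Real.rpow_nonneg (jb_pos x).le _)

lemma kernel_rpow_le {s p c : ℝ} (hc : 0 ≤ c) (hca : c ≤ s * p) {x y : ℝ} (hxy : x + y ≠ 0) :
    (jb x ^ (-s) * jb y ^ (-s) * |x + y| ^ (-(1 : ℝ) / 2)) ^ p ≤
      2 ^ c * (|x + y| ^ (-(p / 2 + c)) *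
        (jb x ^ (-(2 * (s * p) - c)) + jb y ^ (-(2 * (s * p) - c)))) := by
  have hm : 0 < |x + y| := abs_pos.2 hxy
  have hx := (jb_pos x).le
  have hy := (jb_pos y).le
  have hx' : 0 ≤ jb x ^ (-s) := Real.rpow_nonneg hx _
  have hy' : 0 ≤ jb y ^ (-s) := Real.rpow_nonneg hy _
  calc (jb x ^ (-s) * jb y ^ (-s) * |x + y| ^ (-(1 : ℝ) / 2)) ^ p
        = jb x ^ (-(s * p)) * jb y ^ (-(s * p)) * |x + y| ^ (-(p / 2)) := by
        rw [Real.mul_rpow (mul_nonneg hx' hy') (Real.rpow_nonneg hm.le _), Real.mul_rpow hx' hy',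
          ← Real.rpow_mul hx, ← Real.rpow_mul hy, ← Real.rpow_mul hm.le]
        ring_nf
    _ ≤ 2 ^ c * |x + y| ^ (-c) * (jb x ^ (-(2 * (s * p) - c)) + jb y ^ (-(2 * (s * p) - c))) *
          |x + y| ^ (-(p / 2)) := by
      gcongr ?_ * _
      exact jb_rpow_mul_jb_rpow_le hc hca hxy
    _ = _ := by
      rw [show -(p / 2 + c) = -(p / 2) + -c by ring, Real.rpow_add hm]
      ring

lemma tsum_subtype_ofReal_le_ofReal_tsum {ι : Type*} {P : ι → Prop} {f : {i // P i} → ℝ}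
    {g : ι → ℝ} (hg : Summable g) (hg0 : 0 ≤ g) (hfg : ∀ i, f i ≤ g i) :
    ∑' i : {i // P i}, ENNReal.ofReal (f i) ≤ ENNReal.ofReal (∑' i, g i) :=
  calc ∑' i : {i // P i}, ENNReal.ofReal (f i)
      ≤ ∑' i : {i // P i}, ENNReal.ofReal (g i) :=
        ENNReal.tsum_le_tsum fun i => ENNReal.ofReal_le_ofReal (hfg i)
    _ ≤ ∑' i, ENNReal.ofReal (g i) :=
        ENNReal.tsum_comp_le_tsum_of_injective Subtype.val_injective _
    _ = ENNReal.ofReal (∑' i, g i) := (ENNReal.ofReal_tsum_of_nonneg hg0 hg).symm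

theorem kernel_estimate_case3_general (s p' : ℝ) (hs : 1/4 ≤ s)
    (hp' : 1 < p' * (s + 1/4)) :
    ∃ C : ℝ, 0 < C ∧ ∀ n : ℤ, 0 < n →
      (∑' q : {q : ℤ × ℤ // 4 * |q.1| ≤ n ∧ 4 * |q.2| ≤ n ∧ q.1 + q.2 ≠ 0},
        ENNReal.ofReal
          ((jb q.1.1 ^ (-s) * jb q.1.2 ^ (-s)
            * |((q.1.1 + q.1.2 : ℤ) : ℝ)| ^ (-(1:ℝ)/2)) ^ p'))
        ≤ ENNReal.ofReal C := by
  have hp'0 : 0 < p' := by nlinarith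
  obtain ⟨c, hc0, hca, hbc, hac⟩ := exists_exponent_split (a := s * p') (b := p' / 2)
    (by nlinarith) (by nlinarith) (by nlinarith)
  set B : ℤ × ℤ → ℝ := fun p => 2 ^ c * (|((p.1 + p.2 : ℤ) : ℝ)| ^ (-(p' / 2 + c)) *
    (jb p.1 ^ (-(2 * (s * p') - c)) + jb p.2 ^ (-(2 * (s * p') - c))))
  have hB0 : 0 ≤ B := fun p => by
    have := (jb_pos p.1).le
    have := (jb_pos p.2).le
    positivity
  have hB : 0 ≤ ∑' p, B p := tsum_nonneg hB0
  refine ⟨∑' p, B p + 1, by linarith, fun n _ => ?_⟩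
  calc _ ≤ ENNReal.ofReal (∑' p, B p) :=
        tsum_subtype_ofReal_le_ofReal_tsum
          ((summable_abs_int_add_rpow_mul_jb_rpow hbc hac).mul_left _) hB0
          fun q => by
            simp only [B, Int.cast_add]
            exact kernel_rpow_le hc0 hca (x := q.1.1) (y := q.1.2) (mod_cast q.2.2.2)
    _ ≤ _ := ENNReal.ofReal_le_ofReal (by linarith)

/-- Case 3 of the kernel estimate: for `|n₂|,|n₃| ≤ n/4`, `n₂+n₃ ≠ 0`,
`∑ [⟨n₂⟩^{-s}⟨n₃⟩^{-s}|n₂+n₃|^{-1/2}]^{p'}` is uniformly bounded. -/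
theorem kernel_estimate_case3 (s p' : ℝ) (hs : 1/4 ≤ s) (hp'1 : 1 ≤ p')
    (hp' : 1 < p' * (s + 1/4)) :
    ∃ C : ℝ, 0 < C ∧ ∀ n : ℤ, 0 < n →
      (∑' q : {q : ℤ × ℤ // 4 * |q.1| ≤ n ∧ 4 * |q.2| ≤ n ∧ q.1 + q.2 ≠ 0},
        ENNReal.ofReal
          ((jb q.1.1 ^ (-s) * jb q.1.2 ^ (-s)
            * |((q.1.1 + q.1.2 : ℤ) : ℝ)| ^ (-(1:ℝ)/2)) ^ p'))
        ≤ ENNReal.ofReal C :=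
  kernel_estimate_case3_general s p' hs hp'
end

section
/- Let s ≥ 1/4 and p′ ≥ 1 with p′(s+1/4) > 1. Then there is a constant C such that for every integer n ≥ 1, ⟨n⟩^{p′/2} · ∑_{|n₁|>2n} ∑_{|n₂|>2n} ⟨n₁⟩^{−p′(s+1/2)} ⟨n₂⟩^{−p′(s+1/2)} ≤ C. -/
open scoped ENNReal

lemma jb_rpow_nonneg (x γ : ℝ) : 0 ≤ jb x ^ γ := (Real.rpow_pos_of_pos (jb_pos x) γ).le

lemma jb_le_jb_of_abs_le {x y : ℝ} (h : |x| ≤ |y|) : jb x ≤ jb y :=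
  Real.sqrt_le_sqrt (by nlinarith [sq_abs x, sq_abs y, abs_nonneg x])

lemma summable_jb_int_rpow_neg {β : ℝ} (hβ : 1 < β) :
    Summable fun m : ℤ => jb m ^ (-β) := by
  refine (Real.summable_abs_int_rpow hβ).of_norm_bounded_eventually ?_
  filter_upwards [Filter.eventually_cofinite_ne 0] with m hm
  have hm' : 0 < |(m : ℝ)| := abs_pos.mpr (Int.cast_ne_zero.mpr hm)
  rw [Real.norm_of_nonneg (jb_rpow_nonneg _ _)]
  exact Real.rpow_le_rpow_of_nonpos hm' (abs_le_jb _) (by linarith)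

lemma jb_rpow_neg_add_le {a x : ℝ} (β : ℝ) {α : ℝ} (hα : 0 ≤ α) (h : |a| ≤ |x|) :
    jb x ^ (-(β + α)) ≤ jb x ^ (-β) * jb a ^ (-α) := by
  rw [neg_add, Real.rpow_add (jb_pos x)]
  exact mul_le_mul_of_nonneg_left
    (Real.rpow_le_rpow_of_nonpos (jb_pos a) (jb_le_jb_of_abs_le h) (by linarith))
    (jb_rpow_nonneg x _)

lemma jb_rpow_two_mul_mul_le_of_abs_le {a x y : ℝ} (β : ℝ) {α : ℝ} (hα : 0 ≤ α)
    (hx : |a| ≤ |x|) (hy : |a| ≤ |y|) :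
    jb a ^ (2 * α) * (jb x ^ (-(β + α)) * jb y ^ (-(β + α))) ≤ jb x ^ (-β) * jb y ^ (-β) := by
  have ha := jb_pos a
  calc jb a ^ (2 * α) * (jb x ^ (-(β + α)) * jb y ^ (-(β + α)))
      ≤ jb a ^ (2 * α) * ((jb x ^ (-β) * jb a ^ (-α)) * (jb y ^ (-β) * jb a ^ (-α))) := by
        refine mul_le_mul_of_nonneg_left ?_ (jb_rpow_nonneg _ _)
        exact mul_le_mul (jb_rpow_neg_add_le β hα hx) (jb_rpow_neg_add_le β hα hy)
          (jb_rpow_nonneg _ _) (mul_nonneg (jb_rpow_nonneg _ _) (jb_rpow_nonneg _ _))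
    _ = (jb a ^ (2 * α) * jb a ^ (-α) * jb a ^ (-α)) * (jb x ^ (-β) * jb y ^ (-β)) := by ring
    _ = jb x ^ (-β) * jb y ^ (-β) := by
        rw [← Real.rpow_add ha, ← Real.rpow_add ha, show 2 * α + -α + -α = 0 by ring,
          Real.rpow_zero, one_mul]

lemma ENNReal.tsum_subtype_prod_le_tsum_mul_tsum {α β : Type*} (s : Set (α × β))
    (f : α → ℝ≥0∞) (g : β → ℝ≥0∞) :
    ∑' q : s, f q.1.1 * g q.1.2 ≤ (∑' a, f a) * ∑' b, g b :=
  calc ∑' q : s, f q.1.1 * g q.1.2 ≤ ∑' q : α × β, f q.1 * g q.2 :=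
        ENNReal.tsum_comp_le_tsum_of_injective Subtype.val_injective _
    _ = (∑' a, f a) * ∑' b, g b := by
        simp_rw [ENNReal.tsum_prod', ENNReal.tsum_mul_left, ENNReal.tsum_mul_right]

theorem kernel_estimate_case4_general (s p' : ℝ) (hp'1 : 1 ≤ p')
    (hp' : 1 < p' * (s + 1/4)) :
    ∃ C : ℝ, 0 < C ∧ ∀ n : ℤ, 1 ≤ n →
      ENNReal.ofReal (jb n ^ (p'/2)) *
      (∑' q : {q : ℤ × ℤ // 2 * n < |q.1| ∧ 2 * n < |q.2|},
        ENNReal.ofReal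
          (jb q.1.1 ^ (-(p' * (s + 1/2))) * jb q.1.2 ^ (-(p' * (s + 1/2)))))
        ≤ ENNReal.ofReal C := by
  set β := p' * (s + 1/4)
  have hterm (m : ℤ) : 0 ≤ jb m ^ (-β) := jb_rpow_nonneg _ _
  set S := ∑' m : ℤ, jb m ^ (-β)
  have hS : 0 ≤ S := tsum_nonneg hterm
  refine ⟨S * S + 1, by positivity, fun n hn => ?_⟩
  have hfreq {m : ℤ} (hm : 2 * n < |m|) : |(n : ℝ)| ≤ |(m : ℝ)| := by
    rw [← Int.cast_abs, ← Int.cast_abs, Int.cast_le, abs_of_pos (by omega : 0 < n)]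
    omega
  rw [show p' / 2 = 2 * (p' / 4) by ring, show p' * (s + 1/2) = β + p' / 4 by ring,
    ← ENNReal.tsum_mul_left]
  calc _ ≤ ∑' q : {q : ℤ × ℤ // 2 * n < |q.1| ∧ 2 * n < |q.2|},
        ENNReal.ofReal (jb q.1.1 ^ (-β)) * ENNReal.ofReal (jb q.1.2 ^ (-β)) := by
        refine ENNReal.tsum_le_tsum fun ⟨_, hm₁, hm₂⟩ => ?_
        rw [← ENNReal.ofReal_mul (jb_rpow_nonneg _ _), ← ENNReal.ofReal_mul (hterm _)]
        exact ENNReal.ofReal_le_ofReal <|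
          jb_rpow_two_mul_mul_le_of_abs_le β (by linarith) (hfreq hm₁) (hfreq hm₂)
    _ ≤ (∑' m : ℤ, ENNReal.ofReal (jb m ^ (-β))) * ∑' m : ℤ, ENNReal.ofReal (jb m ^ (-β)) :=
        ENNReal.tsum_subtype_prod_le_tsum_mul_tsum _ _ _
    _ = ENNReal.ofReal (S * S) := by
        rw [← ENNReal.ofReal_tsum_of_nonneg hterm (summable_jb_int_rpow_neg hp'),
          ← ENNReal.ofReal_mul hS]
    _ ≤ ENNReal.ofReal (S * S + 1) := ENNReal.ofReal_le_ofReal (by linarith)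

/-- Case 4(1) of the kernel estimate:
`⟨n⟩^{p'/2} ∑_{|n₁|,|n₂|>2n} ⟨n₁⟩^{-p'(s+1/2)}⟨n₂⟩^{-p'(s+1/2)}` is uniformly
bounded. -/
theorem kernel_estimate_case4 (s p' : ℝ) (hs : 1/4 ≤ s) (hp'1 : 1 ≤ p')
    (hp' : 1 < p' * (s + 1/4)) :
    ∃ C : ℝ, 0 < C ∧ ∀ n : ℤ, 1 ≤ n →
      ENNReal.ofReal (jb n ^ (p'/2)) *
      (∑' q : {q : ℤ × ℤ // 2 * n < |q.1| ∧ 2 * n < |q.2|},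
        ENNReal.ofReal
          (jb q.1.1 ^ (-(p' * (s + 1/2))) * jb q.1.2 ^ (-(p' * (s + 1/2)))))
        ≤ ENNReal.ofReal C :=
  kernel_estimate_case4_general s p' hp'1 hp'
end
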